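/- arXiv:1911.00801 — 6 statements merged into one kernel-verified Lean document; each statement's English description precedes it below -/
import Mathlib

section
/- For all pairs of natural numbers (n, m) satisfying one of: n ≥ 4 and m ≥ 8; n ≥ 6 and m ≥ 5; n ≥ 8 and m ≥ 4; or n ≥ 12 and m ≥ 3, the inequality 4·arccosh(cos(π/m)/sin(π/n)) > 2·log(n) holds, where arccosh(x) = log(x + √(x² − 1)). -/
/-!
Since `cosh (log t) = (t + t⁻¹) / 2`, the inequality `arccosh x > log √n` holds as soon as
`n + 1 < 2 √n x`. For `x = cos (π/m) / sin (π/n)`, the bound `sin (π/n) < π/n` reduces this to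
`π² (n + 1)² < 4 n³ cos² (π/m)`, which is monotone in both `n` and `m`, so it suffices to check it
at the corners `(5, 8)`, `(6, 5)`, `(8, 4)` and `(12, 3)` of the four ranges. At `n = 4` the bound
on the sine is too weak and `sin (π/4) = √2/2` is used instead.
-/

open Real

/-- `arccosh x = log (x + √(x² - 1))`. -/
noncomputable def arccosh (x : ℝ) : ℝ := Real.log (x + Real.sqrt (x ^ 2 - 1))

lemma log_lt_arccosh {t x : ℝ} (ht : 0 < t) (h : t ^ 2 + 1 < 2 * t * x) :
    Real.log t < arccosh x := by
  refine Real.log_lt_log ht ?_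
  have : t - x < √(x ^ 2 - 1) := Real.lt_sqrt_of_sq_lt (by nlinarith)
  linarith

lemma two_log_lt_four_arccosh {n x : ℝ} (hn : 0 < n) (hx : 0 ≤ x)
    (h : (n + 1) ^ 2 < 4 * n * x ^ 2) : 2 * Real.log n < 4 * arccosh x := by
  have hsq : √n ^ 2 = n := Real.sq_sqrt hn.le
  have hlt : √n ^ 2 + 1 < 2 * √n * x := by
    rw [hsq]
    refine lt_of_pow_lt_pow_left₀ 2 (by positivity) ?_
    calc (n + 1) ^ 2 < 4 * n * x ^ 2 := h
      _ = (2 * √n * x) ^ 2 := by rw [mul_pow, mul_pow, hsq]; ring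
  have := log_lt_arccosh (Real.sqrt_pos.mpr hn) hlt
  rw [Real.log_sqrt hn.le] at this
  linarith

lemma succ_sq_lt_four_mul_sq_div_sin {n : ℕ} (hn : 2 ≤ n) {c : ℝ}
    (h : π ^ 2 * ((n : ℝ) + 1) ^ 2 < 4 * (n : ℝ) ^ 3 * c ^ 2) :
    ((n : ℝ) + 1) ^ 2 < 4 * n * (c / Real.sin (π / n)) ^ 2 := by
  have hn' : (2 : ℝ) ≤ n := by exact_mod_cast hn
  have hsin_pos : 0 < Real.sin (π / n) :=
    Real.sin_pos_of_pos_of_lt_pi (by positivity) (div_lt_self pi_pos (by linarith))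
  have hsin_sq : Real.sin (π / n) ^ 2 < (π / n) ^ 2 :=
    pow_lt_pow_left₀ (Real.sin_lt (by positivity)) hsin_pos.le two_ne_zero
  rw [div_pow, mul_div_assoc', lt_div_iff₀ (by positivity)]
  calc ((n : ℝ) + 1) ^ 2 * Real.sin (π / n) ^ 2 ≤ ((n : ℝ) + 1) ^ 2 * (π / n) ^ 2 := by gcongr
    _ = π ^ 2 * ((n : ℝ) + 1) ^ 2 / n ^ 2 := by ring
    _ < 4 * (n : ℝ) ^ 3 * c ^ 2 / n ^ 2 := by gcongr
    _ = 4 * n * c ^ 2 := by field_simp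

lemma mul_succ_sq_lt_cube_mul_of_le {k a b n₀ n : ℝ} (hk : 0 ≤ k) (hn₀ : 0 < n₀) (hn : n₀ ≤ n)
    (hab : a ≤ b) (h : k * (n₀ + 1) ^ 2 < n₀ ^ 3 * a) : k * (n + 1) ^ 2 < n ^ 3 * b := by
  have hn_pos : 0 < n := hn₀.trans_le hn
  have hratio : n₀ ^ 3 * (n + 1) ^ 2 ≤ n ^ 3 * (n₀ + 1) ^ 2 := by
    have h₁ : n₀ * (n + 1) ≤ n * (n₀ + 1) := by nlinarith
    calc n₀ ^ 3 * (n + 1) ^ 2 = n₀ * (n₀ * (n + 1)) ^ 2 := by ring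
      _ ≤ n * (n * (n₀ + 1)) ^ 2 := by gcongr
      _ = n ^ 3 * (n₀ + 1) ^ 2 := by ring
  have hb : n₀ ^ 3 * (k * (n + 1) ^ 2) < n₀ ^ 3 * (n ^ 3 * b) := by
    calc n₀ ^ 3 * (k * (n + 1) ^ 2) = k * (n₀ ^ 3 * (n + 1) ^ 2) := by ring
      _ ≤ k * (n ^ 3 * (n₀ + 1) ^ 2) := by gcongr
      _ = n ^ 3 * (k * (n₀ + 1) ^ 2) := by ring
      _ < n ^ 3 * (n₀ ^ 3 * a) := by gcongr
      _ ≤ n₀ ^ 3 * (n ^ 3 * b) := by rw [mul_left_comm]; gcongr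
  exact lt_of_mul_lt_mul_left hb (by positivity)

lemma cos_pi_div_nonneg {m : ℕ} (hm : 2 ≤ m) : 0 ≤ Real.cos (π / m) := by
  have hm' : (2 : ℝ) ≤ m := by exact_mod_cast hm
  apply Real.cos_nonneg_of_neg_pi_div_two_le_of_le
  · have : 0 ≤ π / m := by positivity
    linarith [pi_pos]
  · exact div_le_div_of_nonneg_left pi_pos.le two_pos hm'

lemma cos_pi_div_le_cos_pi_div {m₀ m : ℕ} (hm₀ : 1 ≤ m₀) (hm : m₀ ≤ m) :
    Real.cos (π / m₀) ≤ Real.cos (π / m) := by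
  have hm₀' : (1 : ℝ) ≤ m₀ := by exact_mod_cast hm₀
  have hm' : (m₀ : ℝ) ≤ m := by exact_mod_cast hm
  apply Real.cos_le_cos_of_nonneg_of_le_pi (by positivity)
  · exact div_le_self pi_pos.le hm₀'
  · exact div_le_div_of_nonneg_left pi_pos.le (by linarith) hm'

lemma two_log_lt_four_arccosh_of_corner {n₀ m₀ n m : ℕ} (hn₀ : 2 ≤ n₀) (hm₀ : 2 ≤ m₀)
    (hn : n₀ ≤ n) (hm : m₀ ≤ m)
    (hcorner : π ^ 2 * ((n₀ : ℝ) + 1) ^ 2 < 4 * (n₀ : ℝ) ^ 3 * Real.cos (π / m₀) ^ 2) :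
    2 * Real.log n < 4 * arccosh (Real.cos (π / m) / Real.sin (π / n)) := by
  have hn₀' : (2 : ℝ) ≤ n₀ := by exact_mod_cast hn₀
  have hcos : Real.cos (π / m₀) ^ 2 ≤ Real.cos (π / m) ^ 2 :=
    pow_le_pow_left₀ (cos_pi_div_nonneg hm₀) (cos_pi_div_le_cos_pi_div (by omega) hm) 2
  have hnm : π ^ 2 * ((n : ℝ) + 1) ^ 2 < 4 * (n : ℝ) ^ 3 * Real.cos (π / m) ^ 2 := by
    have := mul_succ_sq_lt_cube_mul_of_le (k := π ^ 2) (a := 4 * Real.cos (π / m₀) ^ 2)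
      (b := 4 * Real.cos (π / m) ^ 2) (n₀ := n₀) (n := n) (sq_nonneg π) (by linarith)
      (by exact_mod_cast hn) (by linarith) (by linarith)
    linarith
  have hn' : (2 : ℝ) ≤ n := by exact_mod_cast hn₀.trans hn
  refine two_log_lt_four_arccosh (by linarith) ?_
    (succ_sq_lt_four_mul_sq_div_sin (hn₀.trans hn) hnm)
  exact div_nonneg (cos_pi_div_nonneg (by omega)) (Real.sin_nonneg_of_nonneg_of_le_pi
    (by positivity) (div_le_self pi_pos.le (by norm_cast; omega)))

lemma pi_sq_lt_d2 : π ^ 2 < 9.93 := by nlinarith [pi_lt_d2, pi_pos]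

lemma cos_sq_pi_div_eight : Real.cos (π / 8) ^ 2 = (2 + √2) / 4 := by
  rw [cos_pi_div_eight, div_pow, Real.sq_sqrt (by positivity)]
  norm_num

lemma one_point_four_lt_sqrt_two : 1.4 < √2 := Real.lt_sqrt_of_sq_lt (by norm_num)

lemma two_log_four_lt_four_arccosh {m : ℕ} (hm : 8 ≤ m) :
    2 * Real.log 4 < 4 * arccosh (Real.cos (π / m) / Real.sin (π / 4)) := by
  have hcos : Real.cos (π / 8) ^ 2 ≤ Real.cos (π / m) ^ 2 :=
    pow_le_pow_left₀ (cos_pi_div_nonneg (by norm_num))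
      (by exact_mod_cast cos_pi_div_le_cos_pi_div (m₀ := 8) (by norm_num) hm) 2
  refine two_log_lt_four_arccosh (by norm_num)
    (div_nonneg (cos_pi_div_nonneg (by omega)) (by rw [sin_pi_div_four]; positivity)) ?_
  rw [sin_pi_div_four, div_pow, div_pow, Real.sq_sqrt zero_le_two]
  rw [cos_sq_pi_div_eight] at hcos
  nlinarith [one_point_four_lt_sqrt_two]

/-- Proposition 3.6 (even case): for natural numbers `(n, m)` in the stated ranges,
`4 · arccosh(cos(π/m)/sin(π/n)) > 2 · log n`. -/
theorem stmt_0 (n m : ℕ)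
    (h : (4 ≤ n ∧ 8 ≤ m) ∨ (6 ≤ n ∧ 5 ≤ m) ∨ (8 ≤ n ∧ 4 ≤ m) ∨ (12 ≤ n ∧ 3 ≤ m)) :
    4 * arccosh (Real.cos (π / m) / Real.sin (π / n)) > 2 * Real.log n := by
  rcases h with ⟨hn, hm⟩ | ⟨hn, hm⟩ | ⟨hn, hm⟩ | ⟨hn, hm⟩
  · rcases hn.eq_or_lt with rfl | hn
    · exact_mod_cast two_log_four_lt_four_arccosh hm
    · refine two_log_lt_four_arccosh_of_corner (n₀ := 5) (m₀ := 8) (by norm_num) (by norm_num)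
        hn hm ?_
      push_cast
      rw [cos_sq_pi_div_eight]
      nlinarith [pi_sq_lt_d2, one_point_four_lt_sqrt_two]
  · refine two_log_lt_four_arccosh_of_corner (n₀ := 6) (m₀ := 5) (by norm_num) (by norm_num)
      hn hm ?_
    have : 2.2 < √5 := Real.lt_sqrt_of_sq_lt (by norm_num)
    norm_num [cos_pi_div_five]
    nlinarith [pi_sq_lt_d2]
  · refine two_log_lt_four_arccosh_of_corner (n₀ := 8) (m₀ := 4) (by norm_num) (by norm_num)
      hn hm ?_
    norm_num [cos_pi_div_four, div_pow]
    nlinarith [pi_sq_lt_d2]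
  · refine two_log_lt_four_arccosh_of_corner (n₀ := 12) (m₀ := 3) (by norm_num) (by norm_num)
      hn hm ?_
    norm_num [cos_pi_div_three]
    nlinarith [pi_sq_lt_d2]
end

section
/- The function f_r(n) = sin(π/n)·(√n + 1/2)/2 is strictly decreasing in n on the real interval [4, ∞). -/
/-! On `(3, ∞)` the derivative of `f_r` is negative: the only positive term, `sin(π/n)/(2√n)`,
is below `π/(2n√n)` because `sin t < t`, while `cos(π/n) ≥ 1/2` makes the negative term
`(π/n²) cos(π/n) (√n + 1/2)` exceed `π/(2n√n)`. -/

open Real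

noncomputable def fr (n : ℝ) : ℝ := sin (π / n) * (√n + 1 / 2) / 2

lemma hasDerivAt_fr {x : ℝ} (hx : 0 < x) :
    HasDerivAt fr ((-(π / x ^ 2) * cos (π / x) * (√x + 1 / 2) + sin (π / x) / (2 * √x)) / 2) x := by
  have hinv : HasDerivAt (fun n : ℝ => π / n) (-(π / x ^ 2)) x := by
    simpa [div_eq_mul_inv] using (hasDerivAt_inv hx.ne').const_mul π
  have hsin := (hasDerivAt_sin (π / x)).comp x hinv
  have hsqrt := (hasDerivAt_sqrt hx.ne').add_const (1 / 2 : ℝ)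
  exact ((hsin.mul hsqrt).div_const 2).congr_deriv (by simp only [Function.comp_apply]; ring)

lemma half_le_cos_pi_div {x : ℝ} (hx : 3 ≤ x) : 1 / 2 ≤ cos (π / x) := by
  rw [← cos_pi_div_three]
  exact cos_le_cos_of_nonneg_of_le_pi (by positivity) (by linarith [pi_pos])
    (div_le_div_of_nonneg_left pi_pos.le (by norm_num) hx)

lemma sin_pi_div_div_lt {x : ℝ} (hx : 3 ≤ x) :
    sin (π / x) / (2 * √x) < π / x ^ 2 * cos (π / x) * (√x + 1 / 2) := by
  have hx0 : 0 < x := by linarith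
  have hsq : √x ^ 2 = x := sq_sqrt hx0.le
  calc sin (π / x) / (2 * √x) < (π / x) / (2 * √x) := by
        gcongr; exact sin_lt (by positivity)
    _ = π / x ^ 2 * (1 / 2) * √x := by
        field_simp
        exact hsq.symm
    _ < π / x ^ 2 * (1 / 2) * (√x + 1 / 2) := by gcongr; linarith
    _ ≤ π / x ^ 2 * cos (π / x) * (√x + 1 / 2) := by
        gcongr; exact half_le_cos_pi_div hx

theorem strictAntiOn_fr : StrictAntiOn fr (Set.Ici 3) := by
  have hpos : ∀ x ∈ Set.Ici (3 : ℝ), 0 < x := fun x hx => by linarith [Set.mem_Ici.mp hx]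
  refine strictAntiOn_of_deriv_neg (convex_Ici 3)
    (fun x hx => (hasDerivAt_fr (hpos x hx)).continuousAt.continuousWithinAt) fun x hx => ?_
  rw [interior_Ici] at hx
  rw [(hasDerivAt_fr (hpos x (Set.Ioi_subset_Ici_self hx))).deriv]
  linarith [sin_pi_div_div_lt (le_of_lt hx)]

/-- The function `f_r(n) = sin(π/n)·(√n + 1/2)/2` is strictly decreasing on `[4, ∞)`. -/
theorem stmt_5 :
    StrictAntiOn (fun n : ℝ => Real.sin (π / n) * (Real.sqrt n + 1 / 2) / 2)
      (Set.Ici (4 : ℝ)) :=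
  strictAntiOn_fr.mono (Set.Ici_subset_Ici.mpr (by norm_num))
end

section
/- For all real numbers n, m satisfying one of: n ≥ 4 and m ≥ 8; n ≥ 6 and m ≥ 6; n ≥ 8 and m ≥ 4; or n ≥ 14 and m ≥ 3, the inequality cos(π/m) > sin(π/n)·(√n + 1/2)/2 holds. -/
open Real

/-! Put `f n = sin (π / n) * (√n + 1 / 2) / 2`. From `sin x ≤ x` we get
`f n ≤ π / (2 √n) + π / (4 n)`, a decreasing bound that is already below `cos (π / b)` at the
threshold `b` for `m` in all cases but `n ∈ [4, 5)`, `m ≥ 8`. There `cos (π / 8) ≥ 0.9228`, and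
on each of `[4, 4.4]` and `[4.4, 5]` we bound `f` by its value at the left end for `sin` and at
the right end for `√`, using `sin (π / 4) = √2 / 2` and the cubic Taylor bound for
`sin (π / 4.4)`. -/

lemma cos_pi_div_le_cos_pi_div_of_le {b m : ℝ} (hb : 1 ≤ b) (hbm : b ≤ m) :
    cos (π / b) ≤ cos (π / m) :=
  cos_le_cos_of_nonneg_of_le_pi (div_nonneg pi_pos.le (by linarith)) (div_le_self pi_pos.le hb)
    (div_le_div_of_nonneg_left pi_pos.le (by linarith) hbm)

lemma sin_le_sub_cube_div_seven {x : ℝ} (hx₀ : 0 ≤ x) (hx₁ : x ≤ 1) :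
    sin x ≤ x - x ^ 3 / 7 := by
  have h := (abs_le.1 (sin_bound (abs_le.2 ⟨by linarith, hx₁⟩ : |x| ≤ 1))).2
  rw [abs_of_nonneg hx₀] at h
  have hx5 : x ^ 5 ≤ x ^ 3 := pow_le_pow_of_le_one hx₀ hx₁ (by norm_num)
  nlinarith [pow_nonneg hx₀ 3]

lemma sin_pi_div_mul_le_of_sq_le {n r : ℝ} (hr : 0 < r) (hrn : r ^ 2 ≤ n) :
    sin (π / n) * (√n + 1 / 2) / 2 ≤ π / (2 * r) + π / (4 * r ^ 2) := by
  have hn : 0 < n := lt_of_lt_of_le (by positivity) hrn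
  have hrs : r ≤ √n := le_sqrt_of_sq_le hrn
  calc sin (π / n) * (√n + 1 / 2) / 2 ≤ π / n * (√n + 1 / 2) / 2 := by
        gcongr; exact sin_le (by positivity)
    _ = π / (2 * √n) + π / (4 * n) := by
        field_simp
        linear_combination 8 * sq_sqrt hn.le
    _ ≤ π / (2 * r) + π / (4 * r ^ 2) := by gcongr

lemma sin_pi_div_mul_lt_of_sq_le {n r c : ℝ} (hr : 0 < r) (hrn : r ^ 2 ≤ n)
    (hc : 3.15 / (2 * r) + 3.15 / (4 * r ^ 2) < c) :
    sin (π / n) * (√n + 1 / 2) / 2 < c := by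
  have hπ : π / (2 * r) + π / (4 * r ^ 2) ≤ 3.15 / (2 * r) + 3.15 / (4 * r ^ 2) := by
    gcongr <;> exact pi_lt_d2.le
  linarith [sin_pi_div_mul_le_of_sq_le hr hrn]

lemma sin_pi_div_mul_le_of_le_of_le {a n b : ℝ} (ha : 2 ≤ a) (han : a ≤ n) (hnb : n ≤ b) :
    sin (π / n) * (√n + 1 / 2) / 2 ≤ sin (π / a) * (√b + 1 / 2) / 2 := by
  have hpn : 0 ≤ π / n := div_nonneg pi_pos.le (by linarith)
  have hpa : π / a ≤ π / 2 := div_le_div_of_nonneg_left pi_pos.le (by norm_num) ha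
  have hsin : sin (π / n) ≤ sin (π / a) :=
    sin_le_sin_of_le_of_le_pi_div_two (by linarith [pi_pos]) hpa
      (div_le_div_of_nonneg_left pi_pos.le (by linarith) han)
  have hsin₀ : 0 ≤ sin (π / a) :=
    sin_nonneg_of_nonneg_of_le_pi (by positivity) (by linarith [pi_pos])
  gcongr

lemma sin_pi_div_mul_lt_cos_pi_div_eight {n : ℝ} (hn : 4 ≤ n) :
    sin (π / n) * (√n + 1 / 2) / 2 < cos (π / 8) := by
  have hcos : 0.9228 ≤ cos (π / 8) := by
    nlinarith [one_sub_sq_div_two_le_cos (x := π / 8), pi_lt_d4, pi_pos]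
  refine lt_of_lt_of_le ?_ hcos
  rcases le_or_gt n 4.4 with h₁ | h₁
  · have h := sin_pi_div_mul_le_of_le_of_le (by norm_num) hn h₁
    rw [sin_pi_div_four] at h
    have hs2 : √2 ≤ 1.4143 := sqrt_le_iff.2 ⟨by norm_num, by norm_num⟩
    have hs : √4.4 ≤ 2.1 := sqrt_le_iff.2 ⟨by norm_num, by norm_num⟩
    nlinarith [sqrt_nonneg 2]
  rcases le_or_gt n 5 with h₂ | h₂
  · have h := sin_pi_div_mul_le_of_le_of_le (by norm_num) h₁.le h₂
    have hx := sin_le_sub_cube_div_seven (x := π / 4.4) (by positivity)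
      (by rw [div_le_one (by norm_num)]; linarith [pi_lt_d2])
    have hs : √5 ≤ 2.2361 := sqrt_le_iff.2 ⟨by norm_num, by norm_num⟩
    have hx₀ : 0.7136 ≤ π / 4.4 := by rw [le_div_iff₀ (by norm_num)]; linarith [pi_gt_d2]
    have hx₁ : π / 4.4 ≤ 0.716 := by rw [div_le_iff₀ (by norm_num)]; linarith [pi_lt_d2]
    have hsin : sin (π / 4.4) ≤ 0.665 := by nlinarith [pow_le_pow_left₀ (by norm_num) hx₀ 3]
    have hsin₀ : 0 ≤ sin (π / 4.4) :=
      sin_nonneg_of_nonneg_of_le_pi (by positivity) (div_le_self pi_pos.le (by norm_num))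
    nlinarith [sqrt_nonneg 5]
  · exact sin_pi_div_mul_lt_of_sq_le (r := 2.2) (by norm_num) (by norm_num; linarith) (by norm_num)

/-- For real `n, m` in the stated ranges, `cos(π/m) > sin(π/n)·(√n + 1/2)/2`. -/
theorem stmt_6 (n m : ℝ)
    (h : (4 ≤ n ∧ 8 ≤ m) ∨ (6 ≤ n ∧ 6 ≤ m) ∨ (8 ≤ n ∧ 4 ≤ m) ∨ (14 ≤ n ∧ 3 ≤ m)) :
    Real.cos (π / m) > Real.sin (π / n) * (Real.sqrt n + 1 / 2) / 2 := by
  rcases h with ⟨hn, hm⟩ | ⟨hn, hm⟩ | ⟨hn, hm⟩ | ⟨hn, hm⟩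
  · exact (sin_pi_div_mul_lt_cos_pi_div_eight hn).trans_le
      (cos_pi_div_le_cos_pi_div_of_le (by norm_num) hm)
  · refine lt_of_lt_of_le ?_ (cos_pi_div_le_cos_pi_div_of_le (by norm_num : (1 : ℝ) ≤ 6) hm)
    have h3 : 1.7 ≤ √3 := le_sqrt_of_sq_le (by norm_num)
    rw [cos_pi_div_six]
    exact sin_pi_div_mul_lt_of_sq_le (r := 2.4) (by norm_num) (by norm_num; linarith)
      (by norm_num at h3 ⊢; linarith)
  · refine lt_of_lt_of_le ?_ (cos_pi_div_le_cos_pi_div_of_le (by norm_num : (1 : ℝ) ≤ 4) hm)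
    have h2 : 1.4 ≤ √2 := le_sqrt_of_sq_le (by norm_num)
    rw [cos_pi_div_four]
    exact sin_pi_div_mul_lt_of_sq_le (r := 2.8) (by norm_num) (by norm_num; linarith)
      (by norm_num at h2 ⊢; linarith)
  · refine lt_of_lt_of_le ?_ (cos_pi_div_le_cos_pi_div_of_le (by norm_num : (1 : ℝ) ≤ 3) hm)
    rw [cos_pi_div_three]
    exact sin_pi_div_mul_lt_of_sq_le (r := 3.7) (by norm_num) (by norm_num; linarith)
      (by norm_num)
end

section
/- For all pairs of natural numbers (n, m) satisfying either n ≥ 5 and m ≥ 6, or n ≥ 7 and m ≥ 4, the inequality sin(π/m)·cosh(a_{n,m}) > cosh(log n) holds, where a_{n,m} = arccosh(cos(π/m)/sin(π/n)) + arccosh(cot(π/m)·cot(π/n)) and arccosh(x) = log(x + √(x² − 1)). -/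
/-!
Writing `s, c` for `sin, cos` of `π/n` and `S, C` for those of `π/m`, the square roots in the two
`arccosh` terms combine rationally and, using `s² = (1 - c)(1 + c)`, give the closed form
`S · cosh a_{n,m} = C² / (1 - c) - 1`. Since `cosh (log n) = (n + 1/n) / 2`, the claim becomes
`(1 - c)(n + 1)² < 2 n C²`. Now `1 - c < π² / (2 n²) < 5 / n²`, while `C² ≥ 3/4` for `m ≥ 6`
and `C² ≥ 1/2` for `m ≥ 4`, which leaves the polynomial inequalities
`5 (n + 1)² ≤ (3/2) n³` for `n ≥ 5` and `5 (n + 1)² ≤ n³` for `n ≥ 7`.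
-/

open Real

lemma arccosh_eq_arcosh : arccosh = Real.arcosh := rfl

lemma cosh_arcosh_add_arcosh {x y : ℝ} (hx : 1 ≤ x) (hy : 1 ≤ y) :
    cosh (arcosh x + arcosh y) = x * y + √(x ^ 2 - 1) * √(y ^ 2 - 1) := by
  rw [cosh_add, cosh_arcosh hx, cosh_arcosh hy, sinh_arcosh hx, sinh_arcosh hy]

/-- Both arguments `x`, `y` of `arccosh` have `x² - 1`, `y² - 1` a square times
`cos² α - sin² β`, so the product of square roots in `cosh (arcosh x + arcosh y)` is rational. -/
lemma sin_mul_cosh_arccosh_add_arccosh {α β : ℝ} (hα : 0 < α) (hβ : 0 < β)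
    (hαβ : α + β ≤ π / 2) :
    sin α * cosh (arccosh (cos α / sin β) + arccosh (cot α * cot β)) =
      cos α ^ 2 / (1 - cos β) - 1 := by
  have hsα : 0 < sin α := sin_pos_of_pos_of_lt_pi hα (by linarith [pi_pos])
  have hsβ : 0 < sin β := sin_pos_of_pos_of_lt_pi hβ (by linarith [pi_pos])
  have hcβ : cos β < 1 := by
    simpa using cos_lt_cos_of_nonneg_of_le_pi le_rfl (by linarith [pi_pos]) hβ
  have hsβ_le : sin β ≤ cos α := by
    rw [← sin_pi_div_two_sub]
    exact sin_le_sin_of_le_of_le_pi_div_two (by linarith) (by linarith) (by linarith)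
  have hcos_add : 0 ≤ cos α * cos β - sin α * sin β := by
    rw [← cos_add]; exact cos_nonneg_of_mem_Icc ⟨by linarith, hαβ⟩
  have hD : 0 ≤ cos α ^ 2 - sin β ^ 2 := by nlinarith
  have hx : 1 ≤ cos α / sin β := (one_le_div hsβ).mpr hsβ_le
  have hcot : cot α * cot β = cos α * cos β / (sin α * sin β) := by
    rw [cot_eq_cos_div_sin, cot_eq_cos_div_sin, div_mul_div_comm]
  have hy : 1 ≤ cot α * cot β := by
    rw [hcot, one_le_div (by positivity)]; linarith
  have hsqrt_x : √((cos α / sin β) ^ 2 - 1) = √(cos α ^ 2 - sin β ^ 2) / sin β := by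
    rw [div_pow, div_sub_one (by positivity), sqrt_div hD, sqrt_sq hsβ.le]
  have hsqrt_y : √((cot α * cot β) ^ 2 - 1) = √(cos α ^ 2 - sin β ^ 2) / (sin α * sin β) := by
    have : (cot α * cot β) ^ 2 - 1 = (cos α ^ 2 - sin β ^ 2) / (sin α * sin β) ^ 2 := by
      rw [hcot, div_pow, div_sub_one (by positivity)]
      congr 1
      linear_combination cos α ^ 2 * sin_sq_add_cos_sq β - sin β ^ 2 * sin_sq_add_cos_sq α
    rw [this, sqrt_div hD, sqrt_sq (by positivity)]
  rw [arccosh_eq_arcosh, cosh_arcosh_add_arcosh hx hy, hsqrt_x, hsqrt_y, div_mul_div_comm,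
    mul_self_sqrt hD, hcot]
  have h1c : 1 - cos β ≠ 0 := by linarith
  field_simp
  linear_combination (-cos α ^ 2) * sin_sq_add_cos_sq β

lemma cosh_log_lt_sq_div_one_sub_cos_pi_div_sub_one {N C : ℝ} (hN : 1 ≤ N)
    (hC : 5 * (N + 1) ^ 2 ≤ 2 * N ^ 3 * C ^ 2) :
    cosh (log N) < C ^ 2 / (1 - cos (π / N)) - 1 := by
  have hN0 : 0 < N := by linarith
  have ht : 0 < π / N := div_pos pi_pos hN0
  have hc : 0 < 1 - cos (π / N) := by
    have := cos_lt_cos_of_nonneg_of_le_pi le_rfl (div_le_self pi_pos.le hN) ht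
    rw [cos_zero] at this; linarith
  have hcos : (1 - cos (π / N)) * (2 * N ^ 2) < 10 := calc
    _ < (π / N) ^ 2 / 2 * (2 * N ^ 2) := by
      gcongr; linarith [one_sub_sq_div_two_lt_cos ht.ne']
    _ = π ^ 2 := by field_simp
    _ < 10 := by nlinarith [pi_lt_d2, pi_pos]
  have hcosh : cosh (log N) + 1 = (N + 1) ^ 2 / (2 * N) := by
    rw [cosh_log hN0]; field_simp; ring
  rw [← add_lt_add_iff_right 1, hcosh, sub_add_cancel, lt_div_iff₀ hc,
    div_mul_eq_mul_div, div_lt_iff₀ (by positivity)]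
  have key : (N + 1) ^ 2 * (1 - cos (π / N)) * (2 * N ^ 2) < C ^ 2 * (2 * N) * (2 * N ^ 2) :=
    calc (N + 1) ^ 2 * (1 - cos (π / N)) * (2 * N ^ 2)
        = (N + 1) ^ 2 * ((1 - cos (π / N)) * (2 * N ^ 2)) := by ring
      _ < (N + 1) ^ 2 * 10 := by gcongr
      _ ≤ C ^ 2 * (2 * N) * (2 * N ^ 2) := by linarith
  exact lt_of_mul_lt_mul_right key (by positivity)

lemma cos_sq_le_cos_sq {x y : ℝ} (hx : 0 ≤ x) (hxy : x ≤ y) (hy : y ≤ π / 2) :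
    cos y ^ 2 ≤ cos x ^ 2 :=
  pow_le_pow_left₀ (cos_nonneg_of_mem_Icc ⟨by linarith, hy⟩)
    (cos_le_cos_of_nonneg_of_le_pi hx (by linarith [pi_pos]) hxy) 2

lemma three_div_four_le_cos_sq_pi_div {M : ℝ} (hM : 6 ≤ M) : 3 / 4 ≤ cos (π / M) ^ 2 := calc
  3 / 4 = cos (π / 6) ^ 2 := by rw [cos_pi_div_six, div_pow, sq_sqrt] <;> norm_num
  _ ≤ cos (π / M) ^ 2 := cos_sq_le_cos_sq (by positivity)
    (div_le_div_of_nonneg_left pi_pos.le (by norm_num) hM) (by linarith [pi_pos])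

lemma one_div_two_le_cos_sq_pi_div {M : ℝ} (hM : 4 ≤ M) : 1 / 2 ≤ cos (π / M) ^ 2 := calc
  1 / 2 = cos (π / 4) ^ 2 := by rw [cos_pi_div_four, div_pow, sq_sqrt] <;> norm_num
  _ ≤ cos (π / M) ^ 2 := cos_sq_le_cos_sq (by positivity)
    (div_le_div_of_nonneg_left pi_pos.le (by norm_num) hM) (by linarith [pi_pos])

/-- Proposition 3.9 (odd case): for natural numbers `(n, m)` with `n ≥ 5, m ≥ 6` or
`n ≥ 7, m ≥ 4`, we have `sin(π/m)·cosh(a_{n,m}) > cosh(log n)`, where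
`a_{n,m} = arccosh(cos(π/m)/sin(π/n)) + arccosh(cot(π/m)·cot(π/n))`. -/
theorem stmt_8 (n m : ℕ)
    (h : (5 ≤ n ∧ 6 ≤ m) ∨ (7 ≤ n ∧ 4 ≤ m)) :
    Real.sin (π / m) *
      Real.cosh (arccosh (Real.cos (π / m) / Real.sin (π / n)) +
        arccosh (Real.cot (π / m) * Real.cot (π / n))) >
    Real.cosh (Real.log n) := by
  obtain ⟨hn, hm, hbound⟩ : (5 : ℝ) ≤ n ∧ (4 : ℝ) ≤ m ∧
      5 * ((n : ℝ) + 1) ^ 2 ≤ 2 * n ^ 3 * cos (π / m) ^ 2 := by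
    rcases h with ⟨hn, hm⟩ | ⟨hn, hm⟩
    · have hn : (5 : ℝ) ≤ n := by exact_mod_cast hn
      have hm : (6 : ℝ) ≤ m := by exact_mod_cast hm
      refine ⟨hn, by linarith, ?_⟩
      calc 5 * ((n : ℝ) + 1) ^ 2 ≤ 2 * n ^ 3 * (3 / 4) := by
            nlinarith [mul_nonneg (sub_nonneg.2 hn) (sq_nonneg (n : ℝ))]
        _ ≤ 2 * n ^ 3 * cos (π / m) ^ 2 := by gcongr; exact three_div_four_le_cos_sq_pi_div hm
    · have hn : (7 : ℝ) ≤ n := by exact_mod_cast hn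
      have hm : (4 : ℝ) ≤ m := by exact_mod_cast hm
      refine ⟨by linarith, hm, ?_⟩
      calc 5 * ((n : ℝ) + 1) ^ 2 ≤ 2 * n ^ 3 * (1 / 2) := by
            nlinarith [mul_nonneg (sub_nonneg.2 hn) (sq_nonneg (n : ℝ))]
        _ ≤ 2 * n ^ 3 * cos (π / m) ^ 2 := by gcongr; exact one_div_two_le_cos_sq_pi_div hm
  have hangles : π / m + π / n ≤ π / 2 := by
    have := div_le_div_of_nonneg_left pi_pos.le (by norm_num) hm
    have := div_le_div_of_nonneg_left pi_pos.le (by norm_num) hn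
    linarith [pi_pos]
  rw [gt_iff_lt, sin_mul_cosh_arccosh_add_arccosh (by positivity) (by positivity) hangles]
  exact cosh_log_lt_sq_div_one_sub_cos_pi_div_sub_one (by linarith) hbound
end

section
/- Define g(n, m) = cos(π/m)·cot(π/n)·√(cos²(π/m)/sin²(π/n) − 1) + (cos(π/m)/sin(π/n))·√(cos²(π/m)·cot²(π/n) − sin²(π/m)) for real n, m ≥ 3 with 1/n + 1/m < 1/2. Then g is strictly increasing in each variable: if 3 ≤ n < n′ and 3 ≤ m < m′ with 1/n + 1/m < 1/2, then g(n, m) < g(n′, m) and g(n, m) < g(n, m′). -/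
/-!
Put `x = π/n`, `y = π/m`; the hypotheses say `x, y > 0` and `x + y < π/2`. Both radicands of `g`
equal `(cos² x - sin² y) / sin² x`, and with `sin² x = (1 - cos x)(1 + cos x)` the two terms
combine to `g = cos y · √(cos² x - sin² y) / (1 - cos x)`. In this form the monotonicity is
visible: increasing `n` or `m` decreases `x` or `y`, which increases `cos x`, resp. increases
`cos y` and decreases `sin y`, while `sin y < cos x` keeps the radicand positive.
-/

open Real

/-- The expansion `g(n, m)` of `sin(π/m)·cosh(a_{n,m})`. -/
noncomputable def g (n m : ℝ) : ℝ :=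
  Real.cos (π / m) * Real.cot (π / n) *
      Real.sqrt (Real.cos (π / m) ^ 2 / Real.sin (π / n) ^ 2 - 1) +
    Real.cos (π / m) / Real.sin (π / n) *
      Real.sqrt (Real.cos (π / m) ^ 2 * Real.cot (π / n) ^ 2 - Real.sin (π / m) ^ 2)

noncomputable def gAngle (x y : ℝ) : ℝ :=
  cos y * √(cos x ^ 2 - sin y ^ 2) / (1 - cos x)

lemma g_eq_gAngle {n m : ℝ} (hsin : 0 < sin (π / n)) : g n m = gAngle (π / n) (π / m) := by
  rw [g, gAngle]
  set x := π / n
  set y := π / m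
  have hcos : cos x < 1 := by nlinarith [sin_sq_add_cos_sq x, cos_le_one x]
  have hradicand₁ : cos y ^ 2 / sin x ^ 2 - 1 = (cos x ^ 2 - sin y ^ 2) / sin x ^ 2 := by
    rw [div_sub_one (by positivity)]
    linear_combination (sin_sq_add_cos_sq y - sin_sq_add_cos_sq x) / sin x ^ 2
  have hradicand₂ : cos y ^ 2 * cot x ^ 2 - sin y ^ 2 = (cos x ^ 2 - sin y ^ 2) / sin x ^ 2 := by
    rw [cot_eq_cos_div_sin]
    field_simp
    linear_combination cos x ^ 2 * sin_sq_add_cos_sq y - sin y ^ 2 * sin_sq_add_cos_sq x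
  have hsqrt : √((cos x ^ 2 - sin y ^ 2) / sin x ^ 2) = √(cos x ^ 2 - sin y ^ 2) / sin x := by
    rw [sqrt_div' _ (sq_nonneg _), sqrt_sq hsin.le]
  rw [hradicand₁, hradicand₂, hsqrt, cot_eq_cos_div_sin]
  have : 1 - cos x ≠ 0 := by linarith
  field_simp
  linear_combination -(cos y * √(cos x ^ 2 - sin y ^ 2)) * sin_sq_add_cos_sq x

lemma sin_sq_lt_cos_sq_of_add_lt_pi_div_two {x y : ℝ} (hx : 0 ≤ x) (hy : 0 ≤ y)
    (hxy : x + y < π / 2) : sin y ^ 2 < cos x ^ 2 := by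
  have hsin : 0 ≤ sin y := sin_nonneg_of_nonneg_of_le_pi hy (by linarith [pi_pos])
  have hlt : sin y < cos x := by
    rw [← cos_pi_div_two_sub]
    exact cos_lt_cos_of_nonneg_of_le_pi hx (by linarith) (by linarith)
  exact pow_lt_pow_left₀ hlt hsin two_ne_zero

lemma cos_lt_one_of_pos_of_lt_pi {x : ℝ} (hx₀ : 0 < x) (hxπ : x < π) : cos x < 1 := by
  simpa using cos_lt_cos_of_nonneg_of_le_pi le_rfl hxπ.le hx₀

lemma gAngle_lt_gAngle_of_lt_left {x x' y : ℝ} (hx' : 0 < x') (hx'x : x' < x) (hy : 0 ≤ y)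
    (hxy : x + y < π / 2) : gAngle x y < gAngle x' y := by
  have hcos_y : 0 < cos y := cos_pos_of_mem_Ioo ⟨by linarith [pi_pos], by linarith⟩
  have hcos_x : 0 < cos x := cos_pos_of_mem_Ioo ⟨by linarith [pi_pos], by linarith⟩
  have hcos : cos x < cos x' := cos_lt_cos_of_nonneg_of_le_pi hx'.le (by linarith) hx'x
  have hcos_x' : cos x' < 1 := cos_lt_one_of_pos_of_lt_pi hx' (by linarith)
  have hradicand : 0 ≤ cos x ^ 2 - sin y ^ 2 := by
    linarith [sin_sq_lt_cos_sq_of_add_lt_pi_div_two (by linarith) hy hxy]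
  have hsqrt : √(cos x ^ 2 - sin y ^ 2) < √(cos x' ^ 2 - sin y ^ 2) := by
    refine sqrt_lt_sqrt hradicand (sub_lt_sub_right ?_ _)
    exact pow_lt_pow_left₀ hcos hcos_x.le two_ne_zero
  exact div_lt_div₀ (mul_lt_mul_of_pos_left hsqrt hcos_y) (by linarith) (by positivity)
    (by linarith)

lemma gAngle_lt_gAngle_of_lt_right {x y y' : ℝ} (hx : 0 < x) (hy' : 0 ≤ y') (hy'y : y' < y)
    (hxy : x + y < π / 2) : gAngle x y < gAngle x y' := by
  have hcos_y : 0 < cos y := cos_pos_of_mem_Ioo ⟨by linarith [pi_pos], by linarith⟩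
  have hcos : cos y < cos y' := cos_lt_cos_of_nonneg_of_le_pi hy' (by linarith) hy'y
  have hsin_y' : 0 ≤ sin y' := sin_nonneg_of_nonneg_of_le_pi hy' (by linarith)
  have hsin : sin y' < sin y := sin_lt_sin_of_lt_of_le_pi_div_two (by linarith) (by linarith) hy'y
  have hcos_x : cos x < 1 := cos_lt_one_of_pos_of_lt_pi hx (by linarith)
  have hsqrt : √(cos x ^ 2 - sin y ^ 2) < √(cos x ^ 2 - sin y' ^ 2) := by
    refine sqrt_lt_sqrt ?_ (sub_lt_sub_left (pow_lt_pow_left₀ hsin hsin_y' two_ne_zero) _)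
    linarith [sin_sq_lt_cos_sq_of_add_lt_pi_div_two hx.le (by linarith) hxy]
  exact div_lt_div_of_pos_right (mul_lt_mul'' hcos hsqrt hcos_y.le (sqrt_nonneg _))
    (by linarith)

lemma sin_pi_div_pos {k : ℝ} (hk : 1 < k) : 0 < sin (π / k) :=
  sin_pos_of_pos_of_lt_pi (div_pos pi_pos (by linarith)) (div_lt_self pi_pos hk)

/-- `g` is strictly increasing in each variable on the region `n, m ≥ 3`,
`1/n + 1/m < 1/2`. -/
theorem stmt_10 (n n' m m' : ℝ) (hn : 3 ≤ n) (hm : 3 ≤ m)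
    (hhyp : 1 / n + 1 / m < 1 / 2) :
    (n < n' → g n m < g n' m) ∧ (m < m' → g n m < g n m') := by
  have hn₀ : 0 < n := by linarith
  have hm₀ : 0 < m := by linarith
  have hangles : π / n + π / m < π / 2 := by
    have := mul_lt_mul_of_pos_left hhyp pi_pos
    field_simp at this ⊢
    linarith
  have hg_n : g n m = gAngle (π / n) (π / m) := g_eq_gAngle (sin_pi_div_pos (by linarith))
  refine ⟨fun hnn' => ?_, fun hmm' => ?_⟩
  · rw [hg_n, g_eq_gAngle (sin_pi_div_pos (by linarith))]
    exact gAngle_lt_gAngle_of_lt_left (div_pos pi_pos (by linarith))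
      (div_lt_div_of_pos_left pi_pos hn₀ hnn') (div_pos pi_pos hm₀).le hangles
  · rw [hg_n, g_eq_gAngle (sin_pi_div_pos (by linarith))]
    exact gAngle_lt_gAngle_of_lt_right (div_pos pi_pos hn₀) (div_pos pi_pos (by linarith)).le
      (div_lt_div_of_pos_left pi_pos hm₀ hmm') hangles
end

section
/- For all real numbers n, m satisfying one of: n ≥ 5 and m ≥ 10; n ≥ 7 and m ≥ 5; or n ≥ 9 and m ≥ 4, the inequality 2·cos²(π/m) − (1/2)·sin(π/n) − (1/2)·sin(2π/m)·tan(π/n) > sin²(π/n)·(n + 1)/(2·cos(π/n)) holds. -/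
/-!
With `x = π / n` and `y = π / m`, multiplying by `2 cos x > 0` and writing `n + 1 = π / x + 1`
turns the inequality into `0 < trigGap x y`. For `0 < x, y ≤ π / 4` every term of `trigGap` is
monotone, so `trigGap` is antitone in both variables; the one non-obvious term is `sin x ^ 2 / x`,
whose derivative has the sign of `2 x cos x - sin x ≥ x - sin x ≥ 0` as long as `cos x ≥ 1 / 2`.
Hence it suffices to check the corners `(π / 5, π / 10)`, `(π / 7, π / 5)` and `(π / 9, π / 4)`,
where `trigGap` is about `0.03`, `0.05` and `0.05`; these are certified by the degree 5 and 6 Taylor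
bounds for `sin` and `cos`, evaluated at rational upper bounds of the arguments.
-/

open Real

theorem le_of_hasDerivAt_le {f g f' g' : ℝ → ℝ} (hf : ∀ t, HasDerivAt f (f' t) t)
    (hg : ∀ t, HasDerivAt g (g' t) t) (h₀ : f 0 ≤ g 0) (hd : ∀ t, 0 ≤ t → f' t ≤ g' t)
    {x : ℝ} (hx : 0 ≤ x) : f x ≤ g x := by
  have hmono : MonotoneOn (fun t ↦ g t - f t) (Set.Ici 0) :=
    monotoneOn_of_hasDerivWithinAt_nonneg (convex_Ici 0)
      (fun t _ ↦ ((hg t).sub (hf t)).continuousAt.continuousWithinAt)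
      (fun t _ ↦ ((hg t).sub (hf t)).hasDerivWithinAt)
      (fun t ht ↦ sub_nonneg.2 (hd t (interior_subset ht)))
  linarith [hmono Set.self_mem_Ici hx hx]

noncomputable def sinTaylor (x : ℝ) : ℝ := x - x ^ 3 / 6 + x ^ 5 / 120

noncomputable def cosTaylor (x : ℝ) : ℝ := 1 - x ^ 2 / 2 + x ^ 4 / 24 - x ^ 6 / 720

theorem cos_le_taylor₄ {x : ℝ} (hx : 0 ≤ x) : cos x ≤ 1 - x ^ 2 / 2 + x ^ 4 / 24 :=
  le_of_hasDerivAt_le (f' := fun t ↦ -sin t) (g' := fun t ↦ -t + t ^ 3 / 6) hasDerivAt_cos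
    (fun t ↦ (((hasDerivAt_const t 1).sub ((hasDerivAt_pow 2 t).div_const 2)).add
      ((hasDerivAt_pow 4 t).div_const 24)).congr_deriv (by ring))
    (by simp) (fun t ht ↦ by linarith [sin_ge_sub_cube ht]) hx

theorem sin_le_sinTaylor {x : ℝ} (hx : 0 ≤ x) : sin x ≤ sinTaylor x :=
  le_of_hasDerivAt_le (f' := cos) (g' := fun t ↦ 1 - t ^ 2 / 2 + t ^ 4 / 24) hasDerivAt_sin
    (fun t ↦ (((hasDerivAt_id t).sub ((hasDerivAt_pow 3 t).div_const 6)).add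
      ((hasDerivAt_pow 5 t).div_const 120)).congr_deriv (by simp; ring))
    (by simp) (fun t ht ↦ cos_le_taylor₄ ht) hx

theorem cosTaylor_le_cos {x : ℝ} (hx : 0 ≤ x) : cosTaylor x ≤ cos x :=
  le_of_hasDerivAt_le (f' := fun t ↦ -t + t ^ 3 / 6 - t ^ 5 / 120) (g' := fun t ↦ -sin t)
    (fun t ↦ ((((hasDerivAt_const t 1).sub ((hasDerivAt_pow 2 t).div_const 2)).add
      ((hasDerivAt_pow 4 t).div_const 24)).sub ((hasDerivAt_pow 6 t).div_const 720)).congr_deriv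
        (by ring)) hasDerivAt_cos
    (by simp) (fun t ht ↦ by
      have := sin_le_sinTaylor ht
      unfold sinTaylor at this
      linarith) hx

theorem sin_le_sinTaylor_of_le {x b : ℝ} (hx : 0 ≤ x) (hxb : x ≤ b) (hb : b ≤ π / 2) :
    sin x ≤ sinTaylor b :=
  (sin_le_sin_of_le_of_le_pi_div_two (by linarith [pi_pos]) hb hxb).trans
    (sin_le_sinTaylor (hx.trans hxb))

theorem cosTaylor_le_cos_of_le {x b : ℝ} (hx : 0 ≤ x) (hxb : x ≤ b) (hb : b ≤ π) :
    cosTaylor b ≤ cos x :=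
  (cosTaylor_le_cos (hx.trans hxb)).trans (cos_le_cos_of_nonneg_of_le_pi hx hb hxb)

theorem sin_sq_div_monotoneOn : MonotoneOn (fun t ↦ sin t ^ 2 / t) (Set.Ioc 0 (π / 3)) := by
  refine monotoneOn_of_hasDerivWithinAt_nonneg
    (f' := fun t ↦ (2 * sin t * cos t * t - sin t ^ 2) / t ^ 2) (convex_Ioc 0 (π / 3))
    (fun t ht ↦ ?_) (fun t ht ↦ ?_) (fun t ht ↦ ?_)
  · exact (((continuous_sin.pow 2).continuousAt).div continuousAt_id ht.1.ne').continuousWithinAt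
  · rw [interior_Ioc] at ht
    exact (((hasDerivAt_sin t).pow 2).div (hasDerivAt_id t) ht.1.ne').hasDerivWithinAt.congr_deriv
      (by simp)
  · rw [interior_Ioc] at ht
    have hcos : 1 / 2 ≤ cos t := cos_pi_div_three ▸
      cos_le_cos_of_nonneg_of_le_pi ht.1.le (by linarith [pi_pos]) ht.2.le
    have hsin : 0 ≤ sin t := sin_nonneg_of_nonneg_of_le_pi ht.1.le (by linarith [pi_pos, ht.2])
    have : 0 ≤ 2 * sin t * cos t * t - sin t ^ 2 := by
      nlinarith [sin_le ht.1.le, mul_le_mul_of_nonneg_left hcos (mul_nonneg hsin ht.1.le)]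
    positivity

noncomputable def trigGap (x y : ℝ) : ℝ :=
  4 * cos y ^ 2 * cos x - sin (2 * x) / 2 - sin (2 * y) * sin x - (π / x + 1) * sin x ^ 2

theorem trigGap_antitone {x X y Y : ℝ} (hx : 0 < x) (hxX : x ≤ X) (hX : X ≤ π / 4) (hy : 0 ≤ y)
    (hyY : y ≤ Y) (hY : Y ≤ π / 4) : trigGap X Y ≤ trigGap x y := by
  have hπ := pi_pos
  have hsin {a b : ℝ} (ha : 0 ≤ a) (hab : a ≤ b) (hb : b ≤ π / 2) : 0 ≤ sin a ∧ sin a ≤ sin b :=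
    ⟨sin_nonneg_of_nonneg_of_le_pi ha (by linarith),
      sin_le_sin_of_le_of_le_pi_div_two (by linarith) hb hab⟩
  have hcos {a b : ℝ} (ha : 0 ≤ a) (hab : a ≤ b) (hb : b ≤ π / 2) : 0 ≤ cos b ∧ cos b ≤ cos a :=
    ⟨cos_nonneg_of_mem_Icc ⟨by linarith, hb⟩, cos_le_cos_of_nonneg_of_le_pi ha (by linarith) hab⟩
  obtain ⟨hsx, hsX⟩ := hsin hx.le hxX (by linarith)
  obtain ⟨hs2y, hs2Y⟩ := hsin (by linarith) (by linarith : 2 * y ≤ 2 * Y) (by linarith)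
  have hs2x := (hsin (by linarith) (by linarith : 2 * x ≤ 2 * X) (by linarith)).2
  obtain ⟨hcX, hcx⟩ := hcos hx.le hxX (by linarith)
  obtain ⟨hcY, hcy⟩ := hcos hy hyY (by linarith)
  have hquot := sin_sq_div_monotoneOn ⟨hx, by linarith⟩ ⟨hx.trans_le hxX, by linarith⟩ hxX
  have hsq : sin x ^ 2 ≤ sin X ^ 2 := pow_le_pow_left₀ hsx hsX 2
  have hcos_term : 4 * cos Y ^ 2 * cos X ≤ 4 * cos y ^ 2 * cos x := by gcongr
  have hmixed : sin (2 * y) * sin x ≤ sin (2 * Y) * sin X :=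
    mul_le_mul hs2Y hsX hsx (hs2y.trans hs2Y)
  have hlast : (π / x + 1) * sin x ^ 2 ≤ (π / X + 1) * sin X ^ 2 := by
    have e (t : ℝ) : (π / t + 1) * sin t ^ 2 = π * (sin t ^ 2 / t) + sin t ^ 2 := by ring
    rw [e, e]
    gcongr
  unfold trigGap
  linarith

theorem le_trigGap_pi_div {k b y b' s : ℝ} (hk : 0 < k) (hb : π / k ≤ b) (hb₄ : 4 * b ≤ π)
    (hy : 0 ≤ y) (hyb' : y ≤ b') (hb' : 2 * b' ≤ π) (hc' : 0 ≤ cosTaylor b')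
    (hs : sin (2 * y) ≤ s) :
    4 * cosTaylor b' ^ 2 * cosTaylor b - sinTaylor (2 * b) / 2 - s * sinTaylor b -
      (k + 1) * sinTaylor b ^ 2 ≤ trigGap (π / k) y := by
  have hπ := pi_pos
  have hx : 0 < π / k := by positivity
  have hsx₀ : 0 ≤ sin (π / k) := sin_nonneg_of_nonneg_of_le_pi hx.le (by linarith)
  have hsx : sin (π / k) ≤ sinTaylor b := sin_le_sinTaylor_of_le hx.le hb (by linarith)
  have hs2x : sin (2 * (π / k)) ≤ sinTaylor (2 * b) :=
    sin_le_sinTaylor_of_le (by positivity) (by linarith) (by linarith)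
  have hcx : cosTaylor b ≤ cos (π / k) := cosTaylor_le_cos_of_le hx.le hb (by linarith)
  have hcy : cosTaylor b' ^ 2 ≤ cos y ^ 2 :=
    pow_le_pow_left₀ hc' (cosTaylor_le_cos_of_le hy hyb' (by linarith)) 2
  have hs2y : 0 ≤ sin (2 * y) := sin_nonneg_of_nonneg_of_le_pi (by linarith) (by linarith)
  have hcos_term : cosTaylor b * cosTaylor b' ^ 2 ≤ cos (π / k) * cos y ^ 2 :=
    mul_le_mul hcx hcy (by positivity) (cos_nonneg_of_mem_Icc ⟨by linarith, by linarith⟩)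
  have hmixed : sin (2 * y) * sin (π / k) ≤ s * sinTaylor b :=
    mul_le_mul hs hsx hsx₀ (hs2y.trans hs)
  have hsq : sin (π / k) ^ 2 ≤ sinTaylor b ^ 2 := pow_le_pow_left₀ hsx₀ hsx 2
  rw [trigGap, div_div_cancel₀ hπ.ne']
  nlinarith

theorem trigGap_pi_div_five_pi_div_ten_pos : 0 < trigGap (π / 5) (π / 10) := by
  refine lt_of_lt_of_le ?_ (le_trigGap_pi_div (b := 0.6284) (b' := 0.3142) (by norm_num)
    (by linarith [pi_lt_d4]) (by linarith [pi_gt_d2]) (by positivity) (by linarith [pi_lt_d4])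
    (by linarith [pi_gt_d2]) (by norm_num [cosTaylor])
    (sin_le_sinTaylor_of_le (b := 0.6284) (by positivity) (by linarith [pi_lt_d4])
      (by linarith [pi_gt_d2])))
  norm_num [sinTaylor, cosTaylor]

theorem trigGap_pi_div_seven_pi_div_five_pos : 0 < trigGap (π / 7) (π / 5) := by
  refine lt_of_lt_of_le ?_ (le_trigGap_pi_div (b := 0.4489) (b' := 0.6284) (by norm_num)
    (by linarith [pi_lt_d4]) (by linarith [pi_gt_d2]) (by positivity) (by linarith [pi_lt_d4])
    (by linarith [pi_gt_d2]) (by norm_num [cosTaylor])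
    (sin_le_sinTaylor_of_le (b := 1.2567) (by positivity) (by linarith [pi_lt_d4])
      (by linarith [pi_gt_d2])))
  norm_num [sinTaylor, cosTaylor]

theorem trigGap_pi_div_nine_pi_div_four_pos : 0 < trigGap (π / 9) (π / 4) := by
  refine lt_of_lt_of_le ?_ (le_trigGap_pi_div (b := 0.3491) (b' := 0.7854) (by norm_num)
    (by linarith [pi_lt_d4]) (by linarith [pi_gt_d2]) (by positivity) (by linarith [pi_lt_d4])
    (by linarith [pi_gt_d2]) (by norm_num [cosTaylor]) (sin_le_one _))
  norm_num [sinTaylor, cosTaylor]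

theorem sub_eq_trigGap_div {n m : ℝ} (hc : cos (π / n) ≠ 0) :
    2 * cos (π / m) ^ 2 - 1 / 2 * sin (π / n) - 1 / 2 * sin (2 * π / m) * tan (π / n) -
      sin (π / n) ^ 2 * (n + 1) / (2 * cos (π / n)) =
      trigGap (π / n) (π / m) / (2 * cos (π / n)) := by
  rw [trigGap, div_div_cancel₀ pi_ne_zero, tan_eq_sin_div_cos, sin_two_mul, mul_div_assoc,
    sin_two_mul]
  field_simp
  ring

theorem trigGap_pi_div_pos_of_le {n m n₀ m₀ : ℝ} (h₀ : 0 < trigGap (π / n₀) (π / m₀)) (hn₀ : 4 ≤ n₀)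
    (hm₀ : 4 ≤ m₀) (hn : n₀ ≤ n) (hm : m₀ ≤ m) : 0 < trigGap (π / n) (π / m) := by
  have hπ := pi_pos
  refine h₀.trans_le
    (trigGap_antitone (div_pos hπ (by linarith)) ?_ ?_ (div_pos hπ (by linarith)).le ?_ ?_) <;>
    gcongr

/-- For real `n, m` in the stated ranges, `g_L(n, m) > g_R(n)`. -/
theorem stmt_13 (n m : ℝ)
    (h : (5 ≤ n ∧ 10 ≤ m) ∨ (7 ≤ n ∧ 5 ≤ m) ∨ (9 ≤ n ∧ 4 ≤ m)) :
    2 * Real.cos (π / m) ^ 2 - 1 / 2 * Real.sin (π / n) -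
        1 / 2 * Real.sin (2 * π / m) * Real.tan (π / n) >
      Real.sin (π / n) ^ 2 * (n + 1) / (2 * Real.cos (π / n)) := by
  have hpos : 0 < trigGap (π / n) (π / m) := by
    rcases h with ⟨hn, hm⟩ | ⟨hn, hm⟩ | ⟨hn, hm⟩
    · exact trigGap_pi_div_pos_of_le trigGap_pi_div_five_pi_div_ten_pos
        (by norm_num) (by norm_num) hn hm
    · exact trigGap_pi_div_pos_of_le trigGap_pi_div_seven_pi_div_five_pos
        (by norm_num) (by norm_num) hn hm
    · exact trigGap_pi_div_pos_of_le trigGap_pi_div_nine_pi_div_four_pos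
        (by norm_num) (by norm_num) hn hm
  have hn : 4 ≤ n := by rcases h with h | h | h <;> linarith [h.1]
  have hcos : 0 < cos (π / n) := by
    have hπ := pi_pos
    refine cos_pos_of_mem_Ioo ⟨by linarith [show 0 < π / n by positivity], ?_⟩
    calc π / n ≤ π / 4 := by gcongr
      _ < π / 2 := by linarith
  rw [gt_iff_lt, ← sub_pos, sub_eq_trigGap_div hcos.ne']
  positivity
end
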